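/- arXiv:0708.3111 — 6 statements merged into one kernel-verified Lean document; each statement's English description precedes it below -/
import Mathlib

section
/- If C is an unmixed clutter with the König property and without isolated vertices, then C has a perfect matching of König type, i.e., there exist pairwise disjoint edges e_1,…,e_g of C whose union is the whole vertex set X, where g is the covering number of C. -/
variable {V : Type} [Fintype V] [DecidableEq V]

/-- A clutter: a family of finsets (edges), none of which contains another. -/
def IsClutter (E : Set (Finset V)) : Prop :=
  ∀ e ∈ E, ∀ f ∈ E, e ⊆ f → e = f

/-- A vertex cover: a set of vertices meeting every edge. -/
def IsVertexCover (E : Set (Finset V)) (C : Finset V) : Prop :=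
  ∀ e ∈ E, (e ∩ C).Nonempty

/-- A minimal vertex cover. -/
def IsMinimalVertexCover (E : Set (Finset V)) (C : Finset V) : Prop :=
  IsVertexCover E C ∧ ∀ D ⊂ C, ¬ IsVertexCover E D

/-- The covering number: minimum cardinality of a vertex cover. -/
noncomputable def coveringNumber (E : Set (Finset V)) : ℕ :=
  sInf {n : ℕ | ∃ C : Finset V, IsVertexCover E C ∧ C.card = n}

/-- Unmixed: all minimal vertex covers have the same cardinality. -/
def Unmixed (E : Set (Finset V)) : Prop :=
  ∀ C D : Finset V, IsMinimalVertexCover E C → IsMinimalVertexCover E D →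
    C.card = D.card

/-- A matching: a set of pairwise disjoint edges. -/
def IsMatching (E : Set (Finset V)) (M : Finset (Finset V)) : Prop :=
  ↑M ⊆ E ∧ (M : Set (Finset V)).Pairwise Disjoint

/-- The König property: the maximum size of a matching equals the covering number. -/
def HasKonigProperty (E : Set (Finset V)) : Prop :=
  (∃ M : Finset (Finset V), IsMatching E M ∧ M.card = coveringNumber E) ∧
  ∀ M : Finset (Finset V), IsMatching E M → M.card ≤ coveringNumber E

/-- A perfect matching of König type: pairwise disjoint edges `em 0, …, em (g-1)`
whose union is the whole vertex set, where `g` is the covering number. -/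
def IsPerfectMatchingKT (E : Set (Finset V)) {g : ℕ} (em : Fin g → Finset V) : Prop :=
  (∀ i, em i ∈ E) ∧ (∀ i j, i ≠ j → Disjoint (em i) (em j)) ∧
  (∀ x : V, ∃ i, x ∈ em i) ∧ g = coveringNumber E

/-- An independent set: contains no edge. -/
def IsIndependentSet (E : Set (Finset V)) (F : Finset V) : Prop :=
  ∀ e ∈ E, ¬ e ⊆ F

/-- A facet of the independence complex: a maximal independent set. -/
def IsFacet (E : Set (Finset V)) (F : Finset V) : Prop :=
  IsIndependentSet E F ∧ ∀ G : Finset V, IsIndependentSet E G → F ⊆ G → F = G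

/-- The set of facets of the independence complex of a clutter. -/
def cFacets (E : Set (Finset V)) : Set (Finset V) := {F | IsFacet E F}

/-- `F : Fin s → Finset V` is a shelling order of the family of facets `Fac`. -/
def IsShelling {s : ℕ} (Fac : Set (Finset V)) (F : Fin s → Finset V) : Prop :=
  Function.Injective F ∧ (∀ G : Finset V, G ∈ Fac ↔ ∃ i, F i = G) ∧
  ∀ i j : Fin s, i < j →
    ∃ v ∈ F j \ F i, ∃ l : Fin s, l < j ∧ F j \ F l = {v}

/-- A family of facets is shellable if it admits a shelling order. -/
def Shellable (Fac : Set (Finset V)) : Prop :=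
  ∃ (s : ℕ) (F : Fin s → Finset V), IsShelling Fac F

/-- A family of facets is pure if all its members have the same cardinality. -/
def PureFamily (Fac : Set (Finset V)) : Prop :=
  ∀ F ∈ Fac, ∀ G ∈ Fac, F.card = G.card

/-- Pure shellable: pure and shellable. -/
def PureShellable (Fac : Set (Finset V)) : Prop :=
  PureFamily Fac ∧ Shellable Fac

/-- A free vertex: a vertex belonging to exactly one edge. -/
def HasFreeVertex (E : Set (Finset V)) : Prop :=
  ∃ x : V, ∃ e ∈ E, x ∈ e ∧ ∀ f ∈ E, x ∈ f → f = e

/-- A cycle of length `r`: `r` distinct vertices and `r` distinct edges such that each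
of the vertices lies in exactly two of the edges and each of the edges contains exactly
two of the vertices. -/
def HasCycleOfLength (E : Set (Finset V)) (r : ℕ) : Prop :=
  ∃ (v : Fin r → V) (f : Fin r → Finset V),
    Function.Injective v ∧ Function.Injective f ∧ (∀ j, f j ∈ E) ∧
    (∀ i : Fin r, (Finset.univ.filter (fun j => v i ∈ f j)).card = 2) ∧
    (∀ j : Fin r, (Finset.univ.filter (fun i => v i ∈ f j)).card = 2)

/-- An unmixed clutter with the König property and without isolated
vertices has a perfect matching of König type. -/
theorem unmixed_konig_has_perfect_matching_of_konig_type
    (E : Set (Finset V)) (hclut : IsClutter E) (hunmixed : Unmixed E)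
    (hkonig : HasKonigProperty E) (hnoiso : ∀ x : V, ∃ e ∈ E, x ∈ e) :
    ∃ em : Fin (coveringNumber E) → Finset V,
      (∀ i, em i ∈ E) ∧ (∀ i j, i ≠ j → Disjoint (em i) (em j)) ∧
      (∀ x : V, ∃ i, x ∈ em i) := by
  classical
  obtain ⟨⟨M, hM, hMcard⟩, hmax⟩ := hkonig
  set g := coveringNumber E with hg
  set S : Set ℕ := {n : ℕ | ∃ C : Finset V, IsVertexCover E C ∧ C.card = n} with hS
  -- the empty set is not an edge
  have hempty : ∅ ∉ E := by
    intro h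
    have h1 : IsMatching E ({∅} : Finset (Finset V)) := by
      constructor
      · intro f hf; simp at hf; simpa [hf] using h
      · intro a ha b hb hab; simp at ha hb; simp [ha, hb] at hab
    have h2 := hmax _ h1
    have hz : g = 0 := by
      have : S = ∅ := by
        ext n; simp only [hS, Set.mem_setOf_eq, Set.mem_empty_iff_false, iff_false]
        rintro ⟨C, hC, -⟩
        have := hC ∅ h
        simp at this
      rw [hg, coveringNumber, ← hS, this, Nat.sInf_empty]
    rw [hz] at h2; simp at h2
  have hnonemptyE : ∀ e ∈ E, e.Nonempty := by
    intro e he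
    rcases e.eq_empty_or_nonempty with h | h
    · exact absurd (h ▸ he) hempty
    · exact h
  -- univ is a cover, so S is nonempty and there is a cover of cardinality g
  have huniv : IsVertexCover E (Finset.univ : Finset V) := by
    intro e he
    simpa using hnonemptyE e he
  have hSne : S.Nonempty := ⟨_, Finset.univ, huniv, rfl⟩
  have hgS : g ∈ S := Nat.sInf_mem hSne
  obtain ⟨C₀, hC₀, hC₀card⟩ := hgS
  have hlb : ∀ C : Finset V, IsVertexCover E C → g ≤ C.card := by
    intro C hC
    exact Nat.sInf_le ⟨C, hC, rfl⟩
  have hC₀min : IsMinimalVertexCover E C₀ := by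
    refine ⟨hC₀, fun D hD hDcov => ?_⟩
    have h1 : D.card < C₀.card := Finset.card_lt_card hD
    have h2 := hlb D hDcov
    omega
  -- all minimal vertex covers have cardinality g
  have hminsize : ∀ C : Finset V, IsMinimalVertexCover E C → C.card = g := by
    intro C hC
    rw [hunmixed C C₀ hC hC₀min, hC₀card]
  -- main claim: every vertex belongs to some edge of the matching
  have hcover : ∀ x : V, ∃ m ∈ M, x ∈ m := by
    intro x
    by_contra hx
    push_neg at hx
    obtain ⟨e, he, hxe⟩ := hnoiso x
    -- the family of independent sets containing e.erase x
    set T : Finset (Finset V) :=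
      Finset.univ.filter (fun F => e.erase x ⊆ F ∧ IsIndependentSet E F) with hT
    have hbase : e.erase x ∈ T := by
      rw [hT, Finset.mem_filter]
      refine ⟨Finset.mem_univ _, subset_rfl, ?_⟩
      intro f hf hsub
      have hfe : f ⊆ e := hsub.trans (Finset.erase_subset _ _)
      have : f = e := hclut f hf e he hfe
      subst this
      exact (Finset.notMem_erase x f) (hsub hxe)
    obtain ⟨F, hFT, hFmax⟩ := T.exists_max_image Finset.card ⟨_, hbase⟩
    rw [hT, Finset.mem_filter] at hFT
    obtain ⟨-, hFsub, hFind⟩ := hFT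
    -- the complement of F is a minimal vertex cover containing x
    have hxF : x ∉ F := by
      intro hxF
      apply hFind e he
      intro y hy
      by_cases hyx : y = x
      · exact hyx ▸ hxF
      · exact hFsub (Finset.mem_erase.mpr ⟨hyx, hy⟩)
    have hCcov : IsVertexCover E Fᶜ := by
      intro f hf
      by_contra hcon
      apply hFind f hf
      intro y hy
      by_contra hyF
      exact hcon ⟨y, Finset.mem_inter.mpr ⟨hy, Finset.mem_compl.mpr hyF⟩⟩
    have hCmin : IsMinimalVertexCover E Fᶜ := by
      refine ⟨hCcov, fun D hD hDcov => ?_⟩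
      have hDsub := hD.subset
      obtain ⟨y, hyC, hyD⟩ := Finset.exists_of_ssubset hD
      have hDind : IsIndependentSet E Dᶜ := by
        intro f hf hsub
        obtain ⟨z, hz⟩ := hDcov f hf
        rw [Finset.mem_inter] at hz
        exact (Finset.mem_compl.mp (hsub hz.1)) hz.2
      have hFD : F ⊆ Dᶜ := by
        intro z hz
        rw [Finset.mem_compl]
        intro hzD
        exact Finset.mem_compl.mp (hDsub hzD) hz
      have hDT : Dᶜ ∈ T := by
        rw [hT, Finset.mem_filter]
        exact ⟨Finset.mem_univ _, hFsub.trans hFD, hDind⟩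
      have hstrict : F ⊂ Dᶜ := by
        refine ⟨hFD, fun hcon => ?_⟩
        have hyF : y ∉ F := Finset.mem_compl.mp hyC
        exact hyF (hcon (Finset.mem_compl.mpr hyD))
      have h1 : F.card < Dᶜ.card := Finset.card_lt_card hstrict
      have h2 := hFmax Dᶜ hDT
      omega
    have hCcard : Fᶜ.card = g := hminsize _ hCmin
    have hxC : x ∈ Fᶜ := Finset.mem_compl.mpr hxF
    -- injection from M into Fᶜ by choosing a point of each edge in the cover
    have hchoice : ∀ m ∈ M, ∃ z, z ∈ m ∩ Fᶜ := fun m hm => hCcov m (hM.1 hm)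
    choose c hc using hchoice
    set img : Finset V := M.attach.image (fun m => c m.1 m.2) with himg
    have hinjcard : img.card = M.card := by
      rw [himg]
      rw [Finset.card_image_of_injective _ ?_, Finset.card_attach]
      rintro ⟨a, ha⟩ ⟨b, hb⟩ hab
      simp only at hab
      by_contra hne
      have hne' : a ≠ b := fun h => hne (by simp [h])
      have hdisj := hM.2 ha hb hne'
      have h1 : c a ha ∈ a := (Finset.mem_inter.mp (hc a ha)).1
      have h2 : c b hb ∈ b := (Finset.mem_inter.mp (hc b hb)).1
      rw [hab] at h1
      exact Finset.disjoint_left.mp hdisj h1 h2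
    have hsub : img ⊆ Fᶜ := by
      intro z hz
      rw [himg, Finset.mem_image] at hz
      obtain ⟨⟨m, hm⟩, -, rfl⟩ := hz
      exact (Finset.mem_inter.mp (hc m hm)).2
    have heq : img = Fᶜ := Finset.eq_of_subset_of_card_le hsub (by omega)
    have : x ∈ img := heq ▸ hxC
    rw [himg, Finset.mem_image] at this
    obtain ⟨⟨m, hm⟩, -, hcm⟩ := this
    exact hx m hm (hcm ▸ (Finset.mem_inter.mp (hc m hm)).1)
  -- enumerate the matching
  let eqv := Finset.equivFinOfCardEq hMcard
  refine ⟨fun i => (eqv.symm i : Finset V), ?_, ?_, ?_⟩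
  · intro i; exact hM.1 (eqv.symm i).2
  · intro i j hij
    have hne : ((eqv.symm i : Finset V)) ≠ ((eqv.symm j : Finset V)) := by
      intro h
      exact hij (by
        have : eqv.symm i = eqv.symm j := Subtype.ext h
        simpa using congrArg eqv this)
    exact hM.2 (eqv.symm i).2 (eqv.symm j).2 hne
  · intro x
    obtain ⟨m, hm, hxm⟩ := hcover x
    exact ⟨eqv ⟨m, hm⟩, by simp [hxm]⟩
end

section
/- Let C be a clutter on a finite vertex set X with a perfect matching e_1,…,e_g of König type. Then the following conditions are equivalent: (a) C is unmixed; (b) for any two distinct edges e, e' of C and any two distinct vertices x ∈ e, y ∈ e' with {x, y} contained in some e_i, the set (e \ {x}) ∪ (e' \ {y}) contains an edge of C; (c) for any two distinct edges e, e' of C, any index i, and any subset T of e_i with T ⊆ e ∪ e', the set ((e ∪ e') \ T) ∪ (e ∩ e') contains an edge of C. -/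
variable {V : Type} [Fintype V] [DecidableEq V]

/-! Let `e₁, …, e_g` be the perfect matching. A vertex cover meets every `eᵢ`, so it has at
least `g` elements, with equality exactly when it meets every `eᵢ` in one vertex; and since
`g` is the covering number, some minimal cover has exactly `g` elements.

Condition (b) forbids a minimal cover from containing two vertices `x, y` of one `eᵢ`: the edges
`e, e'` meeting the cover only in `x` and only in `y` would give an edge inside
`(e \ {x}) ∪ (e' \ {y})`, which misses the cover. Conversely, if (c) fails for `e, e', T`,
the complement of `((e ∪ e') \ T) ∪ (e ∩ e')` is a cover; a minimal cover inside it meets `e`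
and `e'` in two distinct vertices of `T ⊆ eᵢ`, so it has more than `g` elements. Condition (c)
specialises to (b) with `T = {x, y}`. -/

open Finset

section Clutter

variable {α : Type} [DecidableEq α]

/-- Condition (b). -/
def PairExchange (E : Set (Finset α)) {g : ℕ} (em : Fin g → Finset α) : Prop :=
  ∀ e ∈ E, ∀ e' ∈ E, e ≠ e' → ∀ x ∈ e, ∀ y ∈ e', x ≠ y →
    (∃ i, x ∈ em i ∧ y ∈ em i) → ∃ f ∈ E, f ⊆ e.erase x ∪ e'.erase y

/-- Condition (c). -/
def BlockSubsetExchange (E : Set (Finset α)) {g : ℕ} (em : Fin g → Finset α) : Prop :=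
  ∀ e ∈ E, ∀ e' ∈ E, e ≠ e' → ∀ i, ∀ T ⊆ em i, T ⊆ e ∪ e' →
    ∃ f ∈ E, f ⊆ ((e ∪ e') \ T) ∪ (e ∩ e')

theorem BlockSubsetExchange.pairExchange {E : Set (Finset α)} {g : ℕ} {em : Fin g → Finset α}
    (hc : BlockSubsetExchange E em) : PairExchange E em := by
  rintro e he e' he' hne x hx y hy hxy ⟨i, hxi, hyi⟩
  obtain ⟨f, hf, hfs⟩ := hc e he e' he' hne i {x, y} (by grind) (by grind)
  exact ⟨f, hf, hfs.trans (by grind)⟩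

section VertexCover

variable {E : Set (Finset α)} {C : Finset α}

theorem IsVertexCover.coveringNumber_le (hC : IsVertexCover E C) : coveringNumber E ≤ #C :=
  Nat.sInf_le ⟨C, hC, rfl⟩

theorem exists_isMinimalVertexCover_subset [Fintype α] (hC : IsVertexCover E C) :
    ∃ D ⊆ C, IsMinimalVertexCover E D := by
  obtain ⟨D, hDC, hD⟩ := (Set.toFinite {D | IsVertexCover E D}).exists_le_minimal hC
  exact ⟨D, hDC, hD.prop, fun _ hD' => hD.not_prop_of_lt hD'⟩

theorem exists_isMinimalVertexCover_card_eq_coveringNumber [Fintype α] (h0 : ∅ ∉ E) :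
    ∃ C, IsMinimalVertexCover E C ∧ #C = coveringNumber E := by
  have huniv : IsVertexCover E univ := fun e he => by
    simpa using nonempty_iff_ne_empty.2 fun h => h0 (h ▸ he)
  obtain ⟨C, hC, hcard⟩ : coveringNumber E ∈ {n | ∃ C, IsVertexCover E C ∧ #C = n} :=
    Nat.sInf_mem ⟨_, univ, huniv, rfl⟩
  refine ⟨C, ⟨hC, fun D hDC hD => ?_⟩, hcard⟩
  have := card_lt_card hDC
  have := hD.coveringNumber_le
  omega

theorem IsMinimalVertexCover.exists_inter_eq_singleton (hC : IsMinimalVertexCover E C)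
    {x : α} (hx : x ∈ C) : ∃ e ∈ E, e ∩ C = {x} := by
  obtain ⟨e, he, hempty⟩ : ∃ e ∈ E, ¬ (e ∩ C.erase x).Nonempty := by
    simpa [IsVertexCover] using hC.2 _ (erase_ssubset hx)
  rw [not_nonempty_iff_eq_empty, inter_erase, erase_eq_empty_iff] at hempty
  exact ⟨e, he, hempty.resolve_left (hC.1 e he).ne_empty⟩

end VertexCover

section PerfectMatching

variable {E : Set (Finset α)} {g : ℕ} {em : Fin g → Finset α} {C : Finset α}

theorem card_eq_sum_card_inter (hdisj : ∀ i j, i ≠ j → Disjoint (em i) (em j))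
    (hcov : ∀ x, ∃ i, x ∈ em i) (C : Finset α) : #C = ∑ i, #(C ∩ em i) := by
  calc #C = #(univ.biUnion fun i => C ∩ em i) := by
        congr 1; ext v; simpa using fun _ => hcov v
    _ = ∑ i, #(C ∩ em i) := card_biUnion fun i _ j _ hij =>
        (hdisj i j hij).mono inter_subset_right inter_subset_right

theorem IsVertexCover.inter_nonempty (hem : ∀ i, em i ∈ E) (hC : IsVertexCover E C)
    (i : Fin g) : (C ∩ em i).Nonempty := by
  simpa only [inter_comm] using hC _ (hem i)

theorem IsVertexCover.card_eq_iff (hem : ∀ i, em i ∈ E)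
    (hdisj : ∀ i j, i ≠ j → Disjoint (em i) (em j)) (hcov : ∀ x, ∃ i, x ∈ em i)
    (hC : IsVertexCover E C) : #C = g ↔ ∀ i, #(C ∩ em i) = 1 := by
  have hpos : ∀ i ∈ univ, 1 ≤ #(C ∩ em i) := fun i _ => (hC.inter_nonempty hem i).card_pos
  rw [card_eq_sum_card_inter hdisj hcov, eq_comm]
  simpa [eq_comm] using sum_eq_sum_iff_of_le hpos

theorem PairExchange.card_eq_of_isMinimalVertexCover (hem : ∀ i, em i ∈ E)
    (hdisj : ∀ i j, i ≠ j → Disjoint (em i) (em j)) (hcov : ∀ x, ∃ i, x ∈ em i)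
    (hb : PairExchange E em) (hC : IsMinimalVertexCover E C) : #C = g := by
  refine (hC.1.card_eq_iff hem hdisj hcov).2 fun i =>
    le_antisymm (card_le_one.2 fun x hx y hy => ?_) (hC.1.inter_nonempty hem i).card_pos
  by_contra hxy
  rw [mem_inter] at hx hy
  obtain ⟨e, he, hex⟩ := hC.exists_inter_eq_singleton hx.1
  obtain ⟨e', he', hey⟩ := hC.exists_inter_eq_singleton hy.1
  have hne : e ≠ e' := by
    rintro rfl
    exact hxy (singleton_injective (hex.symm.trans hey))
  have hxe : x ∈ e := (mem_inter.1 (hex ▸ mem_singleton_self x)).1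
  have hye : y ∈ e' := (mem_inter.1 (hey ▸ mem_singleton_self y)).1
  obtain ⟨f, hf, hfs⟩ := hb e he e' he' hne x hxe y hye hxy ⟨i, hx.2, hy.2⟩
  have hmiss : ∀ a z, a ∩ C = {z} → Disjoint (a.erase z) C := fun a z h => by
    rw [disjoint_iff_inter_eq_empty, erase_inter, h, erase_singleton]
  obtain ⟨v, hv⟩ := hC.1 f hf
  rw [mem_inter] at hv
  exact disjoint_left.1 (disjoint_union_left.2 ⟨hmiss e x hex, hmiss e' y hey⟩) (hfs hv.1) hv.2

theorem PairExchange.unmixed (hem : ∀ i, em i ∈ E)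
    (hdisj : ∀ i j, i ≠ j → Disjoint (em i) (em j)) (hcov : ∀ x, ∃ i, x ∈ em i)
    (hb : PairExchange E em) : Unmixed E := fun C D hC hD => by
  rw [hb.card_eq_of_isMinimalVertexCover hem hdisj hcov hC,
    hb.card_eq_of_isMinimalVertexCover hem hdisj hcov hD]

theorem Unmixed.blockSubsetExchange [Fintype α] (hpm : IsPerfectMatchingKT E em)
    (hu : Unmixed E) : BlockSubsetExchange E em := by
  obtain ⟨hem, hdisj, hcov, hg⟩ := hpm
  intro e he e' he' _ i T hT _
  by_cases h0 : ∅ ∈ E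
  · exact ⟨∅, h0, empty_subset _⟩
  by_contra! hno
  set B := ((e ∪ e') \ T) ∪ (e ∩ e')
  have hBc : IsVertexCover E Bᶜ := fun f hf => by
    obtain ⟨v, hvf, hvB⟩ := not_subset.1 (hno f hf)
    exact ⟨v, mem_inter.2 ⟨hvf, mem_compl.2 hvB⟩⟩
  obtain ⟨C, hCB, hC⟩ := exists_isMinimalVertexCover_subset hBc
  obtain ⟨C₀, hC₀, hC₀card⟩ := exists_isMinimalVertexCover_card_eq_coveringNumber h0
  have hblock : #(C ∩ em i) = 1 :=
    (hC.1.card_eq_iff hem hdisj hcov).1 (by rw [hu C C₀ hC hC₀, hC₀card, hg]) i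
  have hout : ∀ v ∈ C, v ∈ e ∪ e' → v ∈ T ∧ v ∉ e ∩ e' := fun v hvC hv => by
    have hvB : v ∉ B := mem_compl.1 (hCB hvC)
    grind
  obtain ⟨x, hx⟩ := hC.1 e he
  obtain ⟨y, hy⟩ := hC.1 e' he'
  rw [mem_inter] at hx hy
  obtain ⟨hxT, hxe'⟩ := hout x hx.2 (mem_union_left _ hx.1)
  obtain ⟨hyT, -⟩ := hout y hy.2 (mem_union_right _ hy.1)
  have hxy : x = y :=
    card_le_one.1 hblock.le x (mem_inter.2 ⟨hx.2, hT hxT⟩) y (mem_inter.2 ⟨hy.2, hT hyT⟩)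
  exact hxe' (mem_inter.2 ⟨hx.1, hxy ▸ hy.1⟩)

end PerfectMatching

end Clutter

theorem unmixed_characterization_perfect_matching_general
    (E : Set (Finset V))
    {g : ℕ} (em : Fin g → Finset V) (hpm : IsPerfectMatchingKT E em) :
    (Unmixed E ↔
      ∀ e ∈ E, ∀ e' ∈ E, e ≠ e' → ∀ x ∈ e, ∀ y ∈ e', x ≠ y →
        (∃ i, x ∈ em i ∧ y ∈ em i) →
        ∃ f ∈ E, f ⊆ e.erase x ∪ e'.erase y) ∧
    (Unmixed E ↔
      ∀ e ∈ E, ∀ e' ∈ E, e ≠ e' → ∀ i : Fin g, ∀ T ⊆ em i, T ⊆ e ∪ e' →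
        ∃ f ∈ E, f ⊆ ((e ∪ e') \ T) ∪ (e ∩ e')) := by
  have huc : Unmixed E → BlockSubsetExchange E em := Unmixed.blockSubsetExchange hpm
  obtain ⟨hem, hdisj, hcov, -⟩ := hpm
  have hbu : PairExchange E em → Unmixed E := PairExchange.unmixed hem hdisj hcov
  have hcb : BlockSubsetExchange E em → PairExchange E em := BlockSubsetExchange.pairExchange
  exact ⟨⟨fun hu => hcb (huc hu), hbu⟩, ⟨huc, fun hc => hbu (hcb hc)⟩⟩

/-- For a clutter with a perfect matching `em` of König type, unmixedness
is equivalent to each of the combinatorial conditions (b) and (c). -/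
theorem unmixed_characterization_perfect_matching
    (E : Set (Finset V)) (hclut : IsClutter E)
    {g : ℕ} (em : Fin g → Finset V) (hpm : IsPerfectMatchingKT E em) :
    (Unmixed E ↔
      ∀ e ∈ E, ∀ e' ∈ E, e ≠ e' → ∀ x ∈ e, ∀ y ∈ e', x ≠ y →
        (∃ i, x ∈ em i ∧ y ∈ em i) →
        ∃ f ∈ E, f ⊆ e.erase x ∪ e'.erase y) ∧
    (Unmixed E ↔
      ∀ e ∈ E, ∀ e' ∈ E, e ≠ e' → ∀ i : Fin g, ∀ T ⊆ em i, T ⊆ e ∪ e' →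
        ∃ f ∈ E, f ⊆ ((e ∪ e') \ T) ∪ (e ∩ e')) :=
  unmixed_characterization_perfect_matching_general E em hpm
end

section
/- Let C be a clutter with a perfect matching e_1,…,e_g of König type. If C has no cycles of length 3 or 4 and C is unmixed, then for any two edges f_1, f_2 of C and any e_i, one has f_1 ∩ e_i ⊆ f_2 ∩ e_i or f_2 ∩ e_i ⊆ f_1 ∩ e_i. -/
variable {V : Type} [Fintype V] [DecidableEq V]

/-! Suppose `x₁ ∈ f₁ ∩ eᵢ \ f₂` and `x₂ ∈ f₂ ∩ eᵢ \ f₁`. Without triangles `f₁ ∩ f₂ ⊆ eᵢ`, and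
without cycles of length 3 or 4 the set `(V \ (f₁ ∪ f₂)) ∪ {x₁, x₂}` is a vertex cover: an edge
missing it lies in `f₁ ∪ f₂` and would close a short cycle with `eᵢ`, `f₁`, `f₂` unless it were
`eᵢ` itself. A minimal cover inside that set must keep `x₁` and `x₂`, the only vertices it has in
`f₁` resp. `f₂`; so it meets `eᵢ` twice and every other `eₖ` at least once, and has more than `g`
elements, whereas a minimum vertex cover has exactly `g`. -/

set_option linter.unusedSectionVars false

lemma hasCycleOfLength_three_of_incidence {E : Set (Finset V)} {e₀ e₁ e₂ : Finset V}
    {v₀ v₁ v₂ : V} (he₀ : e₀ ∈ E) (he₁ : e₁ ∈ E) (he₂ : e₂ ∈ E)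
    (h₀₀ : v₀ ∈ e₀) (h₀₁ : v₀ ∈ e₁) (h₀₂ : v₀ ∉ e₂)
    (h₁₀ : v₁ ∉ e₀) (h₁₁ : v₁ ∈ e₁) (h₁₂ : v₁ ∈ e₂)
    (h₂₀ : v₂ ∈ e₀) (h₂₁ : v₂ ∉ e₁) (h₂₂ : v₂ ∈ e₂) :
    HasCycleOfLength E 3 := by
  refine ⟨![v₀, v₁, v₂], ![e₀, e₁, e₂], ?_, ?_, ?_, ?_, ?_⟩
  · intro a b hab; fin_cases a <;> fin_cases b <;> simp_all
  · intro a b hab; fin_cases a <;> fin_cases b <;> simp_all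
  · intro j; fin_cases j <;> assumption
  all_goals
    intro k
    fin_cases k <;>
      simp only [Finset.card_filter, Fin.sum_univ_succ, Fin.sum_univ_zero] <;> simp [*]

lemma hasCycleOfLength_four_of_incidence {E : Set (Finset V)} {e₀ e₁ e₂ e₃ : Finset V}
    {v₀ v₁ v₂ v₃ : V} (he₀ : e₀ ∈ E) (he₁ : e₁ ∈ E) (he₂ : e₂ ∈ E) (he₃ : e₃ ∈ E)
    (h₀₀ : v₀ ∈ e₀) (h₀₁ : v₀ ∈ e₁) (h₀₂ : v₀ ∉ e₂) (h₀₃ : v₀ ∉ e₃)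
    (h₁₀ : v₁ ∉ e₀) (h₁₁ : v₁ ∈ e₁) (h₁₂ : v₁ ∈ e₂) (h₁₃ : v₁ ∉ e₃)
    (h₂₀ : v₂ ∉ e₀) (h₂₁ : v₂ ∉ e₁) (h₂₂ : v₂ ∈ e₂) (h₂₃ : v₂ ∈ e₃)
    (h₃₀ : v₃ ∈ e₀) (h₃₁ : v₃ ∉ e₁) (h₃₂ : v₃ ∉ e₂) (h₃₃ : v₃ ∈ e₃) :
    HasCycleOfLength E 4 := by
  refine ⟨![v₀, v₁, v₂, v₃], ![e₀, e₁, e₂, e₃], ?_, ?_, ?_, ?_, ?_⟩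
  · intro a b hab; fin_cases a <;> fin_cases b <;> simp_all
  · intro a b hab; fin_cases a <;> fin_cases b <;> simp_all
  · intro j; fin_cases j <;> assumption
  all_goals
    intro k
    fin_cases k <;>
      simp only [Finset.card_filter, Fin.sum_univ_succ, Fin.sum_univ_zero] <;> simp [*]

section Crossing

variable {E : Set (Finset V)} {e f₁ f₂ : Finset V} {x₁ x₂ : V}

lemma inter_subset_of_not_hasCycleOfLength_three (h3 : ¬ HasCycleOfLength E 3)
    (he : e ∈ E) (hf₁ : f₁ ∈ E) (hf₂ : f₂ ∈ E)
    (hx₁e : x₁ ∈ e) (hx₁f₁ : x₁ ∈ f₁) (hx₁f₂ : x₁ ∉ f₂)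
    (hx₂e : x₂ ∈ e) (hx₂f₂ : x₂ ∈ f₂) (hx₂f₁ : x₂ ∉ f₁) :
    f₁ ∩ f₂ ⊆ e := by
  intro c hc
  rw [Finset.mem_inter] at hc
  by_contra hce
  exact h3 (hasCycleOfLength_three_of_incidence he hf₁ hf₂
    hx₁e hx₁f₁ hx₁f₂ hce hc.1 hc.2 hx₂e hx₂f₁ hx₂f₂)

lemma mem_of_not_hasCycleOfLength_three_four (h3 : ¬ HasCycleOfLength E 3)
    (h4 : ¬ HasCycleOfLength E 4) {h : Finset V} {w q : V}
    (he : e ∈ E) (hf₁ : f₁ ∈ E) (hf₂ : f₂ ∈ E) (hh : h ∈ E)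
    (hx₁e : x₁ ∈ e) (hx₁f₁ : x₁ ∈ f₁) (hx₁f₂ : x₁ ∉ f₂) (hx₁h : x₁ ∉ h)
    (hx₂e : x₂ ∈ e) (hx₂f₂ : x₂ ∈ f₂) (hx₂f₁ : x₂ ∉ f₁) (hx₂h : x₂ ∉ h)
    (hwh : w ∈ h) (hwf₁ : w ∈ f₁) (hwf₂ : w ∉ f₂)
    (hqh : q ∈ h) (hqf₂ : q ∈ f₂) (hqf₁ : q ∉ f₁) :
    w ∈ e := by
  by_contra hwe
  by_cases hqe : q ∈ e
  · exact h3 (hasCycleOfLength_three_of_incidence he hf₁ hh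
      hx₁e hx₁f₁ hx₁h hwe hwf₁ hwh hqe hqf₁ hqh)
  · exact h4 (hasCycleOfLength_four_of_incidence he hf₁ hh hf₂
      hx₁e hx₁f₁ hx₁h hx₁f₂ hwe hwf₁ hwh hwf₂ hqe hqf₁ hqh hqf₂ hx₂e hx₂f₁ hx₂h hx₂f₂)

lemma isVertexCover_of_not_hasCycleOfLength_three_four (hclut : IsClutter E)
    (h3 : ¬ HasCycleOfLength E 3) (h4 : ¬ HasCycleOfLength E 4)
    (he : e ∈ E) (hf₁ : f₁ ∈ E) (hf₂ : f₂ ∈ E)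
    (hx₁e : x₁ ∈ e) (hx₁f₁ : x₁ ∈ f₁) (hx₁f₂ : x₁ ∉ f₂)
    (hx₂e : x₂ ∈ e) (hx₂f₂ : x₂ ∈ f₂) (hx₂f₁ : x₂ ∉ f₁) :
    IsVertexCover E ((Finset.univ \ (f₁ ∪ f₂)) ∪ {x₁, x₂}) := by
  intro h hh
  by_contra hmiss
  rw [Finset.not_nonempty_iff_eq_empty, ← Finset.disjoint_iff_inter_eq_empty] at hmiss
  have hsub : h ⊆ f₁ ∪ f₂ := fun z hz => by
    by_contra hz'
    exact Finset.disjoint_left.1 hmiss hz (by simp [hz'])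
  have hx₁h : x₁ ∉ h := fun hx => Finset.disjoint_left.1 hmiss hx (by simp)
  have hx₂h : x₂ ∉ h := fun hx => Finset.disjoint_left.1 hmiss hx (by simp)
  obtain ⟨p, hph, hpf₂⟩ := Finset.not_subset.1 fun hhf₂ => hx₂h (hclut h hh f₂ hf₂ hhf₂ ▸ hx₂f₂)
  obtain ⟨q, hqh, hqf₁⟩ := Finset.not_subset.1 fun hhf₁ => hx₁h (hclut h hh f₁ hf₁ hhf₁ ▸ hx₁f₁)
  have hpf₁ : p ∈ f₁ := (Finset.mem_union.1 (hsub hph)).resolve_right hpf₂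
  have hqf₂ : q ∈ f₂ := (Finset.mem_union.1 (hsub hqh)).resolve_left hqf₁
  have hhe : h ⊆ e := fun z hz => by
    by_cases hz₁ : z ∈ f₁ <;> by_cases hz₂ : z ∈ f₂
    · exact inter_subset_of_not_hasCycleOfLength_three h3 he hf₁ hf₂
        hx₁e hx₁f₁ hx₁f₂ hx₂e hx₂f₂ hx₂f₁ (Finset.mem_inter.2 ⟨hz₁, hz₂⟩)
    · exact mem_of_not_hasCycleOfLength_three_four h3 h4 he hf₁ hf₂ hh
        hx₁e hx₁f₁ hx₁f₂ hx₁h hx₂e hx₂f₂ hx₂f₁ hx₂h hz hz₁ hz₂ hqh hqf₂ hqf₁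
    · exact mem_of_not_hasCycleOfLength_three_four h3 h4 he hf₂ hf₁ hh
        hx₂e hx₂f₂ hx₂f₁ hx₂h hx₁e hx₁f₁ hx₁f₂ hx₁h hz hz₂ hz₁ hph hpf₁ hpf₂
    · exact absurd (hsub hz) (by simp [hz₁, hz₂])
  exact hx₁h (hclut h hh e he hhe ▸ hx₁e)

end Crossing

lemma isMinimalVertexCover_iff_minimal {E : Set (Finset V)} {C : Finset V} :
    IsMinimalVertexCover E C ↔ Minimal (IsVertexCover E) C :=
  minimal_iff_forall_lt.symm

lemma IsVertexCover.exists_minimal_subset {E : Set (Finset V)} {C : Finset V}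
    (hC : IsVertexCover E C) : ∃ D ⊆ C, IsMinimalVertexCover E D := by
  simpa only [isMinimalVertexCover_iff_minimal] using
    exists_minimal_le_of_wellFoundedLT _ C hC

lemma exists_isMinimalVertexCover_card_eq_coveringNumber_s5 {E : Set (Finset V)}
    (hpos : 0 < coveringNumber E) :
    ∃ D, IsMinimalVertexCover E D ∧ D.card = coveringNumber E := by
  obtain ⟨C, hC, hCcard⟩ := Nat.sInf_mem (Nat.nonempty_of_pos_sInf hpos)
  obtain ⟨D, hDC, hD⟩ := hC.exists_minimal_subset
  refine ⟨D, hD, le_antisymm ?_ (Nat.sInf_le ⟨D, hD.1, rfl⟩)⟩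
  rw [coveringNumber, ← hCcard]
  exact Finset.card_le_card hDC

lemma IsVertexCover.lt_card_of_one_lt_card_inter {E : Set (Finset V)} {C : Finset V} {g : ℕ}
    {em : Fin g → Finset V} (hE : ∀ k, em k ∈ E) (hdisj : Pairwise (Function.onFun Disjoint em))
    (hC : IsVertexCover E C) {i : Fin g} (hi : 1 < (C ∩ em i).card) : g < C.card :=
  calc g = ∑ _k : Fin g, 1 := by simp
    _ < ∑ k, (C ∩ em k).card := by
      refine Finset.sum_lt_sum (fun k _ => ?_) ⟨i, Finset.mem_univ _, hi⟩
      rw [Nat.one_le_iff_ne_zero, Finset.card_ne_zero, Finset.inter_comm]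
      exact hC _ (hE k)
    _ = (Finset.univ.biUnion fun k => C ∩ em k).card :=
      (Finset.card_biUnion fun a _ b _ hab =>
        ((hdisj hab).mono Finset.inter_subset_right Finset.inter_subset_right)).symm
    _ ≤ C.card :=
      Finset.card_le_card (Finset.biUnion_subset.2 fun _ _ => Finset.inter_subset_left)

lemma IsVertexCover.mem_of_inter_subset_singleton {E : Set (Finset V)} {C D f : Finset V}
    {x : V} (hC : IsVertexCover E C) (hCD : C ⊆ D) (hf : f ∈ E) (hfD : f ∩ D ⊆ {x}) :
    x ∈ C := by
  obtain ⟨y, hy⟩ := hC f hf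
  have hyx : y = x := Finset.mem_singleton.1 (hfD (Finset.inter_subset_inter_left hCD hy))
  exact hyx ▸ (Finset.mem_inter.1 hy).2

/-- An unmixed clutter with a perfect matching of König type and without
cycles of length 3 or 4 satisfies the ordering condition on intersections with the
edges of the matching. -/
theorem unmixed_no_small_cycles_ordering
    (E : Set (Finset V)) (hclut : IsClutter E)
    {g : ℕ} (em : Fin g → Finset V) (hpm : IsPerfectMatchingKT E em)
    (h3 : ¬ HasCycleOfLength E 3) (h4 : ¬ HasCycleOfLength E 4)
    (hunmixed : Unmixed E) :
    ∀ f₁ ∈ E, ∀ f₂ ∈ E, ∀ i : Fin g,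
      f₁ ∩ em i ⊆ f₂ ∩ em i ∨ f₂ ∩ em i ⊆ f₁ ∩ em i := by
  obtain ⟨hE, hdisj, -, hg⟩ := hpm
  intro f₁ hf₁ f₂ hf₂ i
  by_contra! hcross
  obtain ⟨x₁, hx₁, hx₁f₂⟩ := Finset.not_subset.1 hcross.1
  obtain ⟨x₂, hx₂, hx₂f₁⟩ := Finset.not_subset.1 hcross.2
  rw [Finset.mem_inter] at hx₁ hx₂
  replace hx₁f₂ : x₁ ∉ f₂ := fun h => hx₁f₂ (Finset.mem_inter.2 ⟨h, hx₁.2⟩)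
  replace hx₂f₁ : x₂ ∉ f₁ := fun h => hx₂f₁ (Finset.mem_inter.2 ⟨h, hx₂.2⟩)
  have hC := isVertexCover_of_not_hasCycleOfLength_three_four hclut h3 h4 (hE i) hf₁ hf₂
    hx₁.2 hx₁.1 hx₁f₂ hx₂.2 hx₂.1 hx₂f₁
  obtain ⟨C, hCsub, hCmin⟩ := hC.exists_minimal_subset
  have hx₁C : x₁ ∈ C := hCmin.1.mem_of_inter_subset_singleton hCsub hf₁ fun z hz => by
    simp only [Finset.mem_inter, Finset.mem_union, Finset.mem_sdiff] at hz
    grind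
  have hx₂C : x₂ ∈ C := hCmin.1.mem_of_inter_subset_singleton hCsub hf₂ fun z hz => by
    simp only [Finset.mem_inter, Finset.mem_union, Finset.mem_sdiff] at hz
    grind
  have hCcard : g < C.card :=
    hCmin.1.lt_card_of_one_lt_card_inter hE (fun j k hjk => hdisj j k hjk) (i := i) <|
    Finset.one_lt_card.2 ⟨x₁, by simp [hx₁C, hx₁.2], x₂, by simp [hx₂C, hx₂.2],
      fun h => hx₂f₁ (h ▸ hx₁.1)⟩
  obtain ⟨D, hDmin, hDcard⟩ := exists_isMinimalVertexCover_card_eq_coveringNumber_s5 (E := E)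
    (hg ▸ i.pos)
  exact hCcard.ne' (by rw [hunmixed C D hCmin hDmin, hDcard, hg])
end

section
/- Let C be a clutter with a perfect matching e_1,…,e_g of König type. If for any two edges f_1, f_2 of C and any e_i one has f_1 ∩ e_i ⊆ f_2 ∩ e_i or f_2 ∩ e_i ⊆ f_1 ∩ e_i, then C is unmixed. -/
variable {V : Type} [Fintype V] [DecidableEq V]

/-- For a clutter with a perfect matching of König type, the ordering
condition on intersections with the matching edges implies unmixedness. -/
theorem ordering_implies_unmixed
    (E : Set (Finset V)) (hclut : IsClutter E)
    {g : ℕ} (em : Fin g → Finset V) (hpm : IsPerfectMatchingKT E em)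
    (hord : ∀ f₁ ∈ E, ∀ f₂ ∈ E, ∀ i : Fin g,
      f₁ ∩ em i ⊆ f₂ ∩ em i ∨ f₂ ∩ em i ⊆ f₁ ∩ em i) :
    Unmixed E := by
  obtain ⟨hmem, hdisj, hcover, hg⟩ := hpm
  suffices h : ∀ C : Finset V, IsMinimalVertexCover E C → C.card = g by
    intro C D hC hD; rw [h C hC, h D hD]
  rintro C ⟨hcov, hmin⟩
  have key : ∀ x ∈ C, ∃ f ∈ E, x ∈ f ∧ f ∩ C = {x} := by
    intro x hx
    have hsub : C.erase x ⊂ C := Finset.erase_ssubset hx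
    have hnc := hmin _ hsub
    simp only [IsVertexCover, not_forall] at hnc
    obtain ⟨f, hf, hfe⟩ := hnc
    rw [Finset.not_nonempty_iff_eq_empty] at hfe
    obtain ⟨z, hz⟩ := hcov f hf
    obtain ⟨hzf, hzC⟩ := Finset.mem_inter.mp hz
    have hzx : z = x := by
      by_contra hne
      have : z ∈ f ∩ C.erase x :=
        Finset.mem_inter.mpr ⟨hzf, Finset.mem_erase.mpr ⟨hne, hzC⟩⟩
      rw [hfe] at this; exact absurd this (Finset.notMem_empty z)
    subst hzx
    refine ⟨f, hf, hzf, ?_⟩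
    ext y
    simp only [Finset.mem_inter, Finset.mem_singleton]
    constructor
    · rintro ⟨hyf, hyC⟩
      by_contra hne
      have : y ∈ f ∩ C.erase z :=
        Finset.mem_inter.mpr ⟨hyf, Finset.mem_erase.mpr ⟨hne, hyC⟩⟩
      rw [hfe] at this; exact absurd this (Finset.notMem_empty y)
    · rintro rfl; exact ⟨hzf, hzC⟩
  have hcard1 : ∀ i : Fin g, (C ∩ em i).card = 1 := by
    intro i
    rw [Finset.card_eq_one]
    obtain ⟨z, hz⟩ := hcov (em i) (hmem i)
    obtain ⟨hze, hzC⟩ := Finset.mem_inter.mp hz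
    refine ⟨z, ?_⟩
    ext y
    simp only [Finset.mem_inter, Finset.mem_singleton]
    constructor
    · rintro ⟨hyC, hye⟩
      obtain ⟨fy, hfy, hyfy, hfyC⟩ := key y hyC
      obtain ⟨fz, hfz, hzfz, hfzC⟩ := key z hzC
      rcases hord fy hfy fz hfz i with hsub | hsub
      · have : y ∈ fz := (Finset.mem_inter.mp
          (hsub (Finset.mem_inter.mpr ⟨hyfy, hye⟩))).1
        have : y ∈ fz ∩ C := Finset.mem_inter.mpr ⟨this, hyC⟩
        rw [hfzC] at this
        exact Finset.mem_singleton.mp this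
      · have : z ∈ fy := (Finset.mem_inter.mp
          (hsub (Finset.mem_inter.mpr ⟨hzfz, hze⟩))).1
        have : z ∈ fy ∩ C := Finset.mem_inter.mpr ⟨this, hzC⟩
        rw [hfyC] at this
        exact (Finset.mem_singleton.mp this).symm
    · rintro rfl; exact ⟨hzC, hze⟩
  have hC_eq : C = Finset.univ.biUnion (fun i => C ∩ em i) := by
    ext x
    simp only [Finset.mem_biUnion, Finset.mem_univ, true_and, Finset.mem_inter]
    constructor
    · intro hx; obtain ⟨i, hi⟩ := hcover x; exact ⟨i, hx, hi⟩
    · rintro ⟨i, hx, _⟩; exact hx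
  rw [hC_eq, Finset.card_biUnion]
  · simp [hcard1]
  · intro i _ j _ hij
    exact Finset.disjoint_of_subset_left Finset.inter_subset_right
      (Finset.disjoint_of_subset_right Finset.inter_subset_right (hdisj i j hij))
end

section
/- Let C be an unmixed clutter without cycles of length 3 or 4. If e_1,…,e_g is a perfect matching of C of König type, then for every i the edge e_i has a free vertex, i.e., a vertex belonging to no edge of C other than e_i. -/
variable {V : Type} [Fintype V] [DecidableEq V]

/-!
Suppose the edge `e = eᵢ` has no free vertex. Comparing the traces on `e` of the other edges
gives `x₁, x₂ ∈ e` and edges `f₁ ∋ x₁`, `f₂ ∋ x₂` with `x₁ ∉ f₂`, `x₂ ∉ f₁`. Without cycles of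
length 3 or 4, the set `(e ∪ f₁ ∪ f₂) \ {x₁, x₂}` is independent; extend it to a facet `F`.
Then `Fᶜ` is a minimal vertex cover, hence of size `g` by unmixedness. But `Fᶜ` meets each of
the `g` disjoint edges `eⱼ`, and meets `e` twice (`f₁` and `f₂` are not inside `F`, so
`x₁, x₂ ∉ F`): it has more than `g` elements.
-/

open Finset Function

section

variable {α : Type} {E : Set (Finset α)}

theorem IsIndependentSet.exists_isFacet_superset [Finite α] {T : Finset α}
    (hT : IsIndependentSet E T) : ∃ F, IsFacet E F ∧ T ⊆ F := by
  obtain ⟨F, hTF, hF⟩ := (Set.toFinite {G | IsIndependentSet E G}).exists_le_maximal hT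
  exact ⟨F, ⟨hF.1, fun G hG hFG => le_antisymm hFG (hF.2 hG hFG)⟩, hTF⟩

theorem isVertexCover_iff_isIndependentSet_compl [Fintype α] [DecidableEq α] {C : Finset α} :
    IsVertexCover E C ↔ IsIndependentSet E Cᶜ := by
  simp only [IsVertexCover, IsIndependentSet, subset_compl_iff_disjoint_right,
    not_disjoint_iff_nonempty_inter]

theorem IsFacet.isMinimalVertexCover_compl [Fintype α] [DecidableEq α] {F : Finset α}
    (hF : IsFacet E F) : IsMinimalVertexCover E Fᶜ := by
  refine ⟨isVertexCover_iff_isIndependentSet_compl.2 (by rw [compl_compl]; exact hF.1),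
    fun D hD hD_cover => hD.ne ?_⟩
  rw [hF.2 Dᶜ (isVertexCover_iff_isIndependentSet_compl.1 hD_cover)
    (subset_compl_comm.1 hD.subset), compl_compl]

theorem coveringNumber_le_card [DecidableEq α] {C : Finset α} (hC : IsVertexCover E C) :
    coveringNumber E ≤ C.card :=
  Nat.sInf_le ⟨C, hC, rfl⟩

theorem nonempty_of_mem_of_coveringNumber_pos [DecidableEq α] {e : Finset α} (he : e ∈ E)
    (hE : 0 < coveringNumber E) : e.Nonempty := by
  obtain ⟨_, C, hC, -⟩ := Nat.nonempty_of_pos_sInf hE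
  exact (hC e he).mono inter_subset_left

theorem IsVertexCover.exists_isMinimalVertexCover_card_eq [DecidableEq α] {C : Finset α}
    (hC : IsVertexCover E C) :
    ∃ C₀, IsMinimalVertexCover E C₀ ∧ C₀.card = coveringNumber E := by
  obtain ⟨C₀, hC₀, hcard⟩ : ∃ C₀, IsVertexCover E C₀ ∧ C₀.card = coveringNumber E :=
    Nat.sInf_mem (s := {n | ∃ C, IsVertexCover E C ∧ C.card = n}) ⟨_, C, hC, rfl⟩
  refine ⟨C₀, ⟨hC₀, fun D hD hD_cover => ?_⟩, hcard⟩
  have := coveringNumber_le_card hD_cover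
  have := card_lt_card hD
  omega

theorem Unmixed.card_eq_coveringNumber [DecidableEq α] (hE : Unmixed E) {C : Finset α}
    (hC : IsMinimalVertexCover E C) : C.card = coveringNumber E := by
  obtain ⟨C₀, hC₀, hcard⟩ := hC.1.exists_isMinimalVertexCover_card_eq
  exact (hE C C₀ hC hC₀).trans hcard

theorem card_lt_card_of_inter_pairwise_disjoint [DecidableEq α] {ι : Type*} [Fintype ι]
    {s : ι → Finset α} (hs : Pairwise (Disjoint on s)) {C : Finset α}
    (hC : ∀ j, (s j ∩ C).Nonempty) {i : ι} (hi : 1 < (s i ∩ C).card) :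
    Fintype.card ι < C.card :=
  calc Fintype.card ι = ∑ _j : ι, 1 := by simp
    _ < ∑ j, (s j ∩ C).card := sum_lt_sum (fun j _ => (hC j).card_pos) ⟨i, mem_univ i, hi⟩
    _ = (univ.biUnion fun j => s j ∩ C).card :=
      (card_biUnion fun j _ k _ hjk => (hs hjk).mono inter_subset_left inter_subset_left).symm
    _ ≤ C.card := card_le_card (biUnion_subset.2 fun _ _ => inter_subset_right)

theorem hasCycleOfLength_three [DecidableEq α] {a b c : α} {p q r : Finset α}
    (hp : p ∈ E) (hq : q ∈ E) (hr : r ∈ E)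
    (hap : a ∈ p) (haq : a ∈ q) (har : a ∉ r)
    (hbp : b ∉ p) (hbq : b ∈ q) (hbr : b ∈ r)
    (hcp : c ∈ p) (hcq : c ∉ q) (hcr : c ∈ r) :
    HasCycleOfLength E 3 := by
  refine ⟨![a, b, c], ![p, q, r], ?_, ?_, ?_, ?_, ?_⟩
  · intro x y hxy
    fin_cases x <;> fin_cases y <;> simp_all
  · intro x y hxy
    fin_cases x <;> fin_cases y <;> simp_all
  · intro j
    fin_cases j <;> simp_all
  all_goals intro i; fin_cases i <;> rw [card_filter] <;> simp [Fin.sum_univ_three, *]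

theorem hasCycleOfLength_four [DecidableEq α] {a b c d : α} {p q r s : Finset α}
    (hp : p ∈ E) (hq : q ∈ E) (hr : r ∈ E) (hs : s ∈ E)
    (hap : a ∈ p) (haq : a ∈ q) (har : a ∉ r) (has : a ∉ s)
    (hbp : b ∉ p) (hbq : b ∈ q) (hbr : b ∈ r) (hbs : b ∉ s)
    (hcp : c ∉ p) (hcq : c ∉ q) (hcr : c ∈ r) (hcs : c ∈ s)
    (hdp : d ∈ p) (hdq : d ∉ q) (hdr : d ∉ r) (hds : d ∈ s) :
    HasCycleOfLength E 4 := by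
  refine ⟨![a, b, c, d], ![p, q, r, s], ?_, ?_, ?_, ?_, ?_⟩
  · intro x y hxy
    fin_cases x <;> fin_cases y <;> simp_all
  · intro x y hxy
    fin_cases x <;> fin_cases y <;> simp_all
  · intro j
    fin_cases j <;> simp_all
  all_goals intro i; fin_cases i <;> rw [card_filter] <;> simp [Fin.sum_univ_four, *]

structure IsSeparatingPair (E : Set (Finset α)) (e : Finset α) (x₁ x₂ : α)
    (f₁ f₂ : Finset α) : Prop where
  edge : e ∈ E
  edge₁ : f₁ ∈ E
  edge₂ : f₂ ∈ E
  mem₁ : x₁ ∈ e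
  mem₂ : x₂ ∈ e
  mem_edge₁ : x₁ ∈ f₁
  mem_edge₂ : x₂ ∈ f₂
  not_mem_edge₂ : x₁ ∉ f₂
  not_mem_edge₁ : x₂ ∉ f₁

/-- If no vertex of `e` is free, compare the traces `e ∩ k` of the other edges: a largest one
cannot contain all of `e`, and an edge through a missing vertex yields a separating pair. -/
theorem IsClutter.exists_isSeparatingPair [Fintype α] [DecidableEq α] (hE : IsClutter E)
    {e : Finset α} (he : e ∈ E) (hne : e.Nonempty)
    (hfree : ∀ x ∈ e, ∃ f ∈ E, x ∈ f ∧ f ≠ e) :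
    ∃ x₁ x₂ f₁ f₂, IsSeparatingPair E e x₁ x₂ f₁ f₂ := by
  obtain ⟨x, hx⟩ := hne
  obtain ⟨f, hf, -, hfe⟩ := hfree x hx
  obtain ⟨k, ⟨hk, hke⟩, hk_max⟩ := Set.exists_max_image {f | f ∈ E ∧ f ≠ e}
    (fun f => (e ∩ f).card) (Set.toFinite _) ⟨f, hf, hfe⟩
  obtain ⟨z, hze, hzk⟩ := not_subset.1 fun hek => hke (hE e he k hk hek).symm
  obtain ⟨f', hf', hzf', hf'e⟩ := hfree z hze
  have hnot : ¬e ∩ k ⊆ f' := fun hkf' =>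
    (hk_max f' ⟨hf', hf'e⟩).not_gt <| card_lt_card <|
      (ssubset_iff_of_subset (subset_inter inter_subset_left hkf')).2
        ⟨z, mem_inter.2 ⟨hze, hzf'⟩, fun hz => hzk (mem_inter.1 hz).2⟩
  obtain ⟨y, hy, hyf'⟩ := not_subset.1 hnot
  exact ⟨z, y, f', k, he, hf', hk, hze, (mem_inter.1 hy).1, hzf', (mem_inter.1 hy).2, hzk, hyf'⟩

namespace IsSeparatingPair

variable {e f₁ f₂ : Finset α} {x₁ x₂ : α}

theorem symm (h : IsSeparatingPair E e x₁ x₂ f₁ f₂) : IsSeparatingPair E e x₂ x₁ f₂ f₁ :=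
  ⟨h.edge, h.edge₂, h.edge₁, h.mem₂, h.mem₁, h.mem_edge₂, h.mem_edge₁, h.not_mem_edge₁,
    h.not_mem_edge₂⟩

variable [DecidableEq α]

theorem inter_subset (h : IsSeparatingPair E e x₁ x₂ f₁ f₂) (h3 : ¬HasCycleOfLength E 3) :
    f₁ ∩ f₂ ⊆ e := fun z hz => by
  by_contra hze
  exact h3 (hasCycleOfLength_three h.edge h.edge₁ h.edge₂ h.mem₁ h.mem_edge₁ h.not_mem_edge₂
    hze (mem_inter.1 hz).1 (mem_inter.1 hz).2 h.mem₂ h.not_mem_edge₁ h.mem_edge₂)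

theorem exists_mem_sdiff_of_mem_sdiff (h : IsSeparatingPair E e x₁ x₂ f₁ f₂) (hE : IsClutter E)
    (h3 : ¬HasCycleOfLength E 3) {k : Finset α} (hk : k ∈ E) (hk_sub : k ⊆ e ∪ (f₁ ∪ f₂))
    (hx₁k : x₁ ∉ k) {u : α} (huk : u ∈ k) (hu : u ∈ f₁ \ e) : ∃ w ∈ k, w ∈ f₂ \ e := by
  obtain ⟨y, hyk, hyf₁⟩ := not_subset.1 fun hkf₁ => hx₁k (hE k hk f₁ h.edge₁ hkf₁ ▸ h.mem_edge₁)
  have hye : y ∉ e := fun hye => h3 (hasCycleOfLength_three h.edge h.edge₁ hk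
    h.mem₁ h.mem_edge₁ hx₁k (mem_sdiff.1 hu).2 (mem_sdiff.1 hu).1 huk hye hyf₁ hyk)
  refine ⟨y, hyk, mem_sdiff.2 ⟨?_, hye⟩⟩
  simpa [hye, hyf₁] using hk_sub hyk

/-- An edge inside this set avoids `x₁, x₂`, so it leaves `e` through `f₁` or `f₂`; excluding
triangles, it then leaves through both, which closes a 4-cycle. -/
theorem isIndependentSet (h : IsSeparatingPair E e x₁ x₂ f₁ f₂) (hE : IsClutter E)
    (h3 : ¬HasCycleOfLength E 3) (h4 : ¬HasCycleOfLength E 4) :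
    IsIndependentSet E ((e ∪ (f₁ ∪ f₂)) \ {x₁, x₂}) := by
  intro k hk hk_sub
  have hx₁k : x₁ ∉ k := fun hx => (mem_sdiff.1 (hk_sub hx)).2 (by simp)
  have hx₂k : x₂ ∉ k := fun hx => (mem_sdiff.1 (hk_sub hx)).2 (by simp)
  have hk_sub' : k ⊆ e ∪ (f₁ ∪ f₂) := hk_sub.trans sdiff_subset
  obtain ⟨u, huk, hue⟩ := not_subset.1 fun hke => hx₁k (hE k hk e h.edge hke ▸ h.mem₁)
  obtain ⟨⟨u₁, hu₁k, hu₁⟩, ⟨u₂, hu₂k, hu₂⟩⟩ : (∃ w ∈ k, w ∈ f₁ \ e) ∧ ∃ w ∈ k, w ∈ f₂ \ e := by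
    rcases mem_union.1 ((mem_union.1 (hk_sub' huk)).resolve_left hue) with hu | hu
    · exact ⟨⟨u, huk, mem_sdiff.2 ⟨hu, hue⟩⟩,
        h.exists_mem_sdiff_of_mem_sdiff hE h3 hk hk_sub' hx₁k huk (mem_sdiff.2 ⟨hu, hue⟩)⟩
    · exact ⟨h.symm.exists_mem_sdiff_of_mem_sdiff hE h3 hk (union_comm f₁ f₂ ▸ hk_sub') hx₂k
        huk (mem_sdiff.2 ⟨hu, hue⟩), ⟨u, huk, mem_sdiff.2 ⟨hu, hue⟩⟩⟩
  rw [mem_sdiff] at hu₁ hu₂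
  exact h4 (hasCycleOfLength_four h.edge h.edge₁ hk h.edge₂
    h.mem₁ h.mem_edge₁ hx₁k h.not_mem_edge₂
    hu₁.2 hu₁.1 hu₁k (fun hu => hu₁.2 (h.inter_subset h3 (mem_inter.2 ⟨hu₁.1, hu⟩)))
    hu₂.2 (fun hu => hu₂.2 (h.inter_subset h3 (mem_inter.2 ⟨hu, hu₂.1⟩))) hu₂k hu₂.1
    h.mem₂ h.not_mem_edge₁ hx₂k h.mem_edge₂)

theorem mem_compl_of_subset [Fintype α] (h : IsSeparatingPair E e x₁ x₂ f₁ f₂)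
    {F : Finset α} (hF : IsIndependentSet E F) (hsub : (e ∪ (f₁ ∪ f₂)) \ {x₁, x₂} ⊆ F) :
    x₁ ∈ Fᶜ := by
  rw [mem_compl]
  intro hx₁
  refine hF f₁ h.edge₁ fun y hy => ?_
  rcases eq_or_ne y x₁ with rfl | hne
  · exact hx₁
  · exact hsub (by simp [hy, hne, ne_of_mem_of_not_mem hy h.not_mem_edge₁])

end IsSeparatingPair

end

/-- In an unmixed clutter without cycles of length 3 or 4, every edge of
a perfect matching of König type has a free vertex. -/
theorem matching_edges_have_free_vertex
    (E : Set (Finset V)) (hclut : IsClutter E) (hunmixed : Unmixed E)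
    (h3 : ¬ HasCycleOfLength E 3) (h4 : ¬ HasCycleOfLength E 4)
    {g : ℕ} (em : Fin g → Finset V) (hpm : IsPerfectMatchingKT E em) :
    ∀ i : Fin g, ∃ x ∈ em i, ∀ f ∈ E, x ∈ f → f = em i := by
  obtain ⟨hem, hdisj, -, rfl⟩ := hpm
  intro i
  by_contra! hfree
  obtain ⟨x₁, x₂, f₁, f₂, hsep⟩ := hclut.exists_isSeparatingPair (hem i)
    (nonempty_of_mem_of_coveringNumber_pos (hem i) i.pos) hfree
  obtain ⟨F, hF, hTF⟩ := (hsep.isIndependentSet hclut h3 h4).exists_isFacet_superset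
  have hC := hF.isMinimalVertexCover_compl
  have hx₁ := hsep.mem_compl_of_subset hF.1 hTF
  have hx₂ := hsep.symm.mem_compl_of_subset hF.1 (by rwa [union_comm f₂, pair_comm])
  have htwo : 1 < (em i ∩ Fᶜ).card := one_lt_card.2
    ⟨x₁, mem_inter.2 ⟨hsep.mem₁, hx₁⟩, x₂, mem_inter.2 ⟨hsep.mem₂, hx₂⟩,
      ne_of_mem_of_not_mem hsep.mem_edge₁ hsep.not_mem_edge₁⟩
  have hlt := card_lt_card_of_inter_pairwise_disjoint hdisj (fun j => hC.1 (em j) (hem j)) htwo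
  rw [Fintype.card_fin, hunmixed.card_eq_coveringNumber hC] at hlt
  exact lt_irrefl _ hlt
end

section
/- Let G be a finite simple graph with vertex set V = {x_1,…,x_n}, and let G' = G ∪ W(V) be the whisker graph obtained from G by adding n new vertices y_1,…,y_n and the new edges {x_i, y_i} for i = 1,…,n. Then the independence complex Δ_{G'} is pure shellable. -/
variable {V : Type} [Fintype V] [DecidableEq V]

/-- The edges of a simple graph, viewed as a clutter of 2-element finsets. -/
def graphEdges (G : SimpleGraph V) : Set (Finset V) :=
  {t | ∃ a b : V, G.Adj a b ∧ t = {a, b}}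

/-- The whisker graph `G ∪ W(V)`: a copy of `G` on the `inl` vertices together with a
whisker edge `{inl a, inr a}` for every vertex `a`. -/
def whiskerGraph (G : SimpleGraph V) : SimpleGraph (V ⊕ V) where
  Adj u w :=
    (∃ a b : V, G.Adj a b ∧ u = Sum.inl a ∧ w = Sum.inl b) ∨
    (∃ a : V, (u = Sum.inl a ∧ w = Sum.inr a) ∨ (u = Sum.inr a ∧ w = Sum.inl a))
  symm := by
    constructor
    rintro u w (⟨a, b, hab, rfl, rfl⟩ | ⟨a, ⟨rfl, rfl⟩ | ⟨rfl, rfl⟩⟩)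
    · exact Or.inl ⟨b, a, hab.symm, rfl, rfl⟩
    · exact Or.inr ⟨a, Or.inr ⟨rfl, rfl⟩⟩
    · exact Or.inr ⟨a, Or.inl ⟨rfl, rfl⟩⟩
  loopless := by
    constructor
    rintro u (⟨a, b, hab, rfl, h⟩ | ⟨a, ⟨rfl, h⟩ | ⟨rfl, h⟩⟩)
    · rw [Sum.inl.injEq] at h; subst h; exact G.loopless.irrefl a hab
    · simp at h
    · simp at h


/-!
A maximal independent set of `G ∪ W(V)` contains exactly one end of each whisker, so the facets
are the sets `inl '' S ∪ inr '' Sᶜ` with `S` independent in `G`; all of them have `n` elements.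
Listing them by increasing `#S` is a shelling: for `i < j` there is `a ∈ S_j \ S_i`, the
independent set `S_j.erase a` comes before `S_j`, and its facet misses only `inl a` from that
of `S_j`.
-/

open Finset Function

section SortByCard

variable {α : Type*}

lemma Set.Finite.exists_enum_monotone_card {𝒮 : Set (Finset α)} (h𝒮 : 𝒮.Finite) :
    ∃ (s : ℕ) (e : Fin s → Finset α),
      Injective e ∧ Set.range e = 𝒮 ∧ Monotone fun i => (e i).card := by
  let L := h𝒮.toFinset.toList.mergeSort fun S T => decide (S.card ≤ T.card)
  have hsorted : L.Pairwise fun S T => S.card ≤ T.card :=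
    (List.pairwise_mergeSort (fun _ _ _ h₁ h₂ => by simp only [decide_eq_true_eq] at *; omega)
      (fun S T => by simpa using le_total S.card T.card) _).imp (by simp)
  refine ⟨L.length, L.get, List.nodup_iff_injective_get.1 ?_, ?_, ?_⟩
  · exact (List.mergeSort_perm _ _).nodup_iff.2 (nodup_toList _)
  · ext S
    simp [L, List.mem_mergeSort]
  · exact monotone_iff_forall_lt.2 fun i j hij => hsorted.rel_get_of_lt hij

variable [DecidableEq α]

lemma exists_lt_eq_erase_of_monotone_card {s : ℕ} {e : Fin s → Finset α} (he : Injective e)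
    (hmono : Monotone fun i => (e i).card) (herase : ∀ j a, (e j).erase a ∈ Set.range e)
    {i j : Fin s} (hij : i < j) :
    ∃ a ∈ e j \ e i, ∃ l < j, e l = (e j).erase a := by
  obtain ⟨a, ha⟩ : (e j \ e i).Nonempty := by
    rw [sdiff_nonempty]
    exact fun hji => he.ne hij.ne' (eq_of_subset_of_card_le hji (hmono hij.le))
  obtain ⟨l, hl⟩ := herase j a
  refine ⟨a, ha, l, lt_of_not_ge fun hjl => ?_, hl⟩
  have hcard : (e j).card ≤ ((e j).erase a).card := hl ▸ hmono hjl
  exact (card_erase_lt_of_mem (mem_sdiff.1 ha).1).not_ge hcard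

end SortByCard

section ComplementaryFacets

variable {α : Type} [Fintype α] [DecidableEq α]

lemma disjSum_compl_injective : Injective fun S : Finset α => S.disjSum Sᶜ :=
  fun S T h => by simpa using congrArg toLeft h

lemma disjSum_compl_sdiff_disjSum_compl_erase {S : Finset α} {a : α} (ha : a ∈ S) :
    S.disjSum Sᶜ \ (S.erase a).disjSum (S.erase a)ᶜ = {Sum.inl a} := by
  ext (b | b) <;> by_cases hb : b = a <;> simp_all

lemma pureFamily_image_disjSum_compl (𝒮 : Set (Finset α)) :
    PureFamily ((fun S => S.disjSum Sᶜ) '' 𝒮) := by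
  rintro _ ⟨S, -, rfl⟩ _ ⟨T, -, rfl⟩
  simp only [card_disjSum, card_add_card_compl]

lemma shellable_image_disjSum_compl {𝒮 : Set (Finset α)} (h𝒮 : IsLowerSet 𝒮) :
    Shellable ((fun S => S.disjSum Sᶜ) '' 𝒮) := by
  obtain ⟨s, e, he, hrange, hmono⟩ := 𝒮.toFinite.exists_enum_monotone_card
  have herase : ∀ j a, (e j).erase a ∈ Set.range e := fun j a =>
    hrange ▸ h𝒮 (erase_subset a (e j)) (hrange ▸ Set.mem_range_self j)
  refine ⟨s, fun i => (e i).disjSum (e i)ᶜ, disjSum_compl_injective.comp he, fun F => ?_,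
    fun i j hij => ?_⟩
  · rw [← hrange, ← Set.range_comp]
    exact Iff.rfl
  · obtain ⟨a, ha, l, hlj, hl⟩ := exists_lt_eq_erase_of_monotone_card he hmono herase hij
    refine ⟨Sum.inl a, by simpa using ha, l, hlj, ?_⟩
    simpa only [hl] using disjSum_compl_sdiff_disjSum_compl_erase (mem_sdiff.1 ha).1

lemma pureShellable_image_disjSum_compl {𝒮 : Set (Finset α)} (h𝒮 : IsLowerSet 𝒮) :
    PureShellable ((fun S => S.disjSum Sᶜ) '' 𝒮) :=
  ⟨pureFamily_image_disjSum_compl 𝒮, shellable_image_disjSum_compl h𝒮⟩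

end ComplementaryFacets

section Whisker

variable {α : Type} [DecidableEq α] (G : SimpleGraph α) {F : Finset (α ⊕ α)}

lemma mem_graphEdges_whiskerGraph {e : Finset (α ⊕ α)} :
    e ∈ graphEdges (whiskerGraph G) ↔
      (∃ a b, G.Adj a b ∧ e = {Sum.inl a, Sum.inl b}) ∨ ∃ a, e = {Sum.inl a, Sum.inr a} := by
  constructor
  · rintro ⟨u, w, (⟨a, b, hab, rfl, rfl⟩ | ⟨a, ⟨rfl, rfl⟩ | ⟨rfl, rfl⟩⟩), rfl⟩
    · exact Or.inl ⟨a, b, hab, rfl⟩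
    · exact Or.inr ⟨a, rfl⟩
    · exact Or.inr ⟨a, pair_comm _ _⟩
  · rintro (⟨a, b, hab, rfl⟩ | ⟨a, rfl⟩)
    · exact ⟨_, _, Or.inl ⟨a, b, hab, rfl, rfl⟩, rfl⟩
    · exact ⟨_, _, Or.inr ⟨a, Or.inl ⟨rfl, rfl⟩⟩, rfl⟩

lemma isIndependentSet_whiskerGraph_iff :
    IsIndependentSet (graphEdges (whiskerGraph G)) F ↔
      G.IsIndepSet (F.toLeft : Set α) ∧ Disjoint F.toLeft F.toRight := by
  simp only [IsIndependentSet, mem_graphEdges_whiskerGraph, or_imp, forall_and,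
    forall_exists_index, and_imp, SimpleGraph.isIndepSet_iff, Set.Pairwise, disjoint_left,
    mem_coe, mem_toLeft, mem_toRight]
  simp only [forall_comm (α := Finset _), forall_eq, insert_subset_iff, singleton_subset_iff,
    not_and]
  exact and_congr ⟨fun h a ha b hb _ hab => h a b hab ha hb,
    fun h a b hab ha hb => h ha hb hab.ne hab⟩ Iff.rfl

variable [Fintype α]

lemma isIndependentSet_whiskerGraph_disjSum_compl_iff (S : Finset α) :
    IsIndependentSet (graphEdges (whiskerGraph G)) (S.disjSum Sᶜ) ↔ G.IsIndepSet ↑S := by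
  simp [isIndependentSet_whiskerGraph_iff, disjoint_compl_right]

lemma isFacet_whiskerGraph_iff :
    IsFacet (graphEdges (whiskerGraph G)) F ↔
      ∃ S : Finset α, G.IsIndepSet ↑S ∧ S.disjSum Sᶜ = F := by
  have hcompl := isIndependentSet_whiskerGraph_disjSum_compl_iff G
  constructor
  · rintro ⟨hF, hmax⟩
    rw [isIndependentSet_whiskerGraph_iff] at hF
    refine ⟨F.toLeft, hF.1, (hmax _ ((hcompl _).2 hF.1) ?_).symm⟩
    rw [subset_disjSum]
    exact ⟨subset_rfl, subset_compl_iff_disjoint_left.2 hF.2⟩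
  · rintro ⟨S, hS, rfl⟩
    refine ⟨(hcompl S).2 hS, fun T hT hST => ?_⟩
    rw [isIndependentSet_whiskerGraph_iff] at hT
    obtain ⟨hSl, hScr⟩ := disjSum_subset.1 hST
    refine hST.antisymm (subset_disjSum.2 ⟨?_, ?_⟩)
    · exact disjoint_compl_right_iff.1 (hT.2.mono_right hScr)
    · exact subset_compl_iff_disjoint_right.2 (hT.2.symm.mono_right hSl)

lemma cFacets_whiskerGraph :
    cFacets (graphEdges (whiskerGraph G)) =
      (fun S => S.disjSum Sᶜ) '' {S : Finset α | G.IsIndepSet ↑S} :=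
  Set.ext fun _ => isFacet_whiskerGraph_iff G

end Whisker

/-- The independence complex of a whisker graph is pure shellable. -/
theorem whisker_graph_pure_shellable (G : SimpleGraph V) :
    PureShellable (cFacets (graphEdges (whiskerGraph G))) := by
  rw [cFacets_whiskerGraph]
  exact pureShellable_image_disjSum_compl fun S T hTS hS => hS.mono hTS
end
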